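/- arXiv:1007.4761 — 2 statements merged into one kernel-verified Lean document; each statement's English description precedes it below -/
import Mathlib

section
/- Let k be an even divisor of 2n with k ∤ n, so k = 2p with p ∣ n and n/p odd, say n = p(2l+1). Then ⟨t^k⟩ ≅ ℤ_{2l+1} is a normal subgroup of the binary dihedral group 2D_{2n}, and the quotient 2D_{2n}/⟨t^k⟩ is isomorphic to the binary dihedral group 2D_{2p} of order 4p (interpreting 2D_2 ≅ ℤ₄). -/
/-!
Reducing exponents modulo `2p` maps `a i ↦ a i` and `xa i ↦ xa i` from `2D_{2n}` onto `2D_{2p}`;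
this is a homomorphism exactly because `n = p(2l+1) ≡ p [MOD 2p]`. Its kernel contains `t^{2p}` (`t = a 1`),
and comparing orders (`4n / 4p = 2l+1 = orderOf (t^{2p})`) shows that it is `⟨t^{2p}⟩`,
a cyclic group of order `2l+1`.
-/

namespace QuaternionGroup

variable {m d : ℕ}

theorem natCast_mul_odd (m : ℕ) (hd : Odd d) : ((m * d : ℕ) : ZMod (2 * m)) = m := by
  obtain ⟨r, rfl⟩ := hd
  rw [show m * (2 * r + 1) = m + 2 * m * r by ring, Nat.cast_add, Nat.cast_mul,
    ZMod.natCast_self, zero_mul, add_zero]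

def castHom (hd : Odd d) : QuaternionGroup (m * d) →* QuaternionGroup m :=
  let c := ZMod.castHom (mul_dvd_mul_left 2 (dvd_mul_right m d)) (ZMod (2 * m))
  MonoidHom.mk' (fun
      | a i => a (c i)
      | xa i => xa (c i))
    (by
      rintro (i | i) (j | j) <;>
        simp only [a_mul_a, a_mul_xa, xa_mul_a, xa_mul_xa, map_add, map_sub, map_natCast,
          natCast_mul_odd m hd])

theorem castHom_surjective (hd : Odd d) : Function.Surjective (castHom (m := m) hd) := by
  have hc := ZMod.castHom_surjective (mul_dvd_mul_left 2 (dvd_mul_right m d))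
  rintro (j | j) <;> obtain ⟨i, rfl⟩ := hc j
  exacts [⟨a i, rfl⟩, ⟨xa i, rfl⟩]

theorem card_zpowers_a_one_pow_two_mul (hm : m ≠ 0) :
    Nat.card (Subgroup.zpowers (a 1 ^ (2 * m) : QuaternionGroup (m * d))) = d := by
  rw [Nat.card_zpowers, orderOf_pow' _ (by positivity), orderOf_a_one,
    Nat.gcd_eq_right (mul_dvd_mul_left 2 (dvd_mul_right m d)), ← mul_assoc,
    Nat.mul_div_cancel_left _ (by positivity)]

theorem card_ker_castHom [NeZero m] (hd : Odd d) : Nat.card (castHom (m := m) hd).ker = d := by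
  have : NeZero (m * d) := ⟨mul_ne_zero (NeZero.ne m) hd.pos.ne'⟩
  have h := (castHom (m := m) hd).ker.card_mul_index
  rw [Subgroup.index_ker, MonoidHom.range_eq_top.mpr (castHom_surjective hd), Subgroup.card_top,
    Nat.card_eq_fintype_card (α := QuaternionGroup m),
    Nat.card_eq_fintype_card (α := QuaternionGroup (m * d)), card, card] at h
  refine Nat.eq_of_mul_eq_mul_right (Nat.mul_pos four_pos (Nat.pos_of_neZero m)) ?_
  rw [h]
  ring

theorem ker_castHom [NeZero m] (hd : Odd d) :
    (castHom (m := m) hd).ker = Subgroup.zpowers (a 1 ^ (2 * m)) := by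
  have : NeZero (m * d) := ⟨mul_ne_zero (NeZero.ne m) hd.pos.ne'⟩
  refine (Subgroup.eq_of_le_of_card_ge ?_ ?_).symm
  · rw [Subgroup.zpowers_le, MonoidHom.mem_ker, map_pow]
    change a (ZMod.castHom _ _ 1) ^ _ = 1
    rw [map_one, a_one_pow_n]
  · rw [card_ker_castHom, card_zpowers_a_one_pow_two_mul (NeZero.ne m)]

end QuaternionGroup

/-- Let `k = 2p` be an even divisor of `2n` with `k ∤ n`, so `p ∣ n` and
`n/p` odd, say `n = p * (2l+1)`.  Then `⟨t^k⟩ ≅ ℤ_{2l+1}` is a normal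
subgroup of the binary dihedral group `2D_{2n}` (dicyclic of order `4n`,
`t = a 1`), and the quotient `2D_{2n}/⟨t^k⟩` is isomorphic to the binary
dihedral group `2D_{2p}` of order `4p` (expressed via a surjective
homomorphism onto `QuaternionGroup p` with kernel `⟨t^k⟩`). -/
theorem binaryDihedral_quotient_binaryDihedral (n p l k : ℕ)
    (hp : 0 < p) (hn : n = p * (2 * l + 1)) (hk : k = 2 * p) :
    let N : Subgroup (QuaternionGroup n) :=
      Subgroup.zpowers ((QuaternionGroup.a 1) ^ k)
    N.Normal ∧
    Nonempty (N ≃* Multiplicative (ZMod (2 * l + 1))) ∧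
    ∃ ψ : QuaternionGroup n →* QuaternionGroup p,
      Function.Surjective ψ ∧ ψ.ker = N := by
  subst hn hk
  intro N
  have : NeZero p := ⟨hp.ne'⟩
  have hd : Odd (2 * l + 1) := odd_two_mul_add_one l
  have hker : (QuaternionGroup.castHom (m := p) hd).ker = N := QuaternionGroup.ker_castHom hd
  refine ⟨hker ▸ MonoidHom.normal_ker _, ⟨mulEquivOfCyclicCardEq ?_⟩,
    QuaternionGroup.castHom hd, QuaternionGroup.castHom_surjective hd, hker⟩
  rw [QuaternionGroup.card_zpowers_a_one_pow_two_mul hp.ne',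
    Nat.card_congr Multiplicative.toAdd, Nat.card_zmod]
end

section
/- Let A = ℤ_{kl} and B = ℤ_{ml}, with the canonical surjections onto F = ℤ_l. The fibred product Γ = {(a,b) ∈ ℤ_{kl} × ℤ_{ml} : a ≡ b (mod l)} is isomorphic to ℤ_{al} × ℤ_b, where a = lcm(k,m) and b = gcd(k,m). -/
section aux

variable (k m l : ℕ)

/-- The "difference" homomorphism whose kernel is the fibred product. -/
noncomputable def fpHom : ZMod (k * l) × ZMod (m * l) →+ ZMod l :=
  ((ZMod.castHom (dvd_mul_left l k) (ZMod l)).toAddMonoidHom.comp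
      (AddMonoidHom.fst _ _)) -
    ((ZMod.castHom (dvd_mul_left l m) (ZMod l)).toAddMonoidHom.comp
      (AddMonoidHom.snd _ _))

lemma fpHom_apply (p : ZMod (k * l) × ZMod (m * l)) :
    fpHom k m l p =
      ZMod.castHom (dvd_mul_left l k) (ZMod l) p.1 -
        ZMod.castHom (dvd_mul_left l m) (ZMod l) p.2 := rfl

lemma mem_fpKer_iff (p : ZMod (k * l) × ZMod (m * l)) :
    p ∈ (fpHom k m l).ker ↔
      ZMod.castHom (dvd_mul_left l k) (ZMod l) p.1 =
        ZMod.castHom (dvd_mul_left l m) (ZMod l) p.2 := by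
  rw [AddMonoidHom.mem_ker, fpHom_apply, sub_eq_zero]

end aux

/-- The fibred product `Γ = {(a,b) ∈ ℤ_{kl} × ℤ_{ml} : a ≡ b (mod l)}`
(over the reduction maps to `ℤ_l`) is isomorphic to `ℤ_{al} × ℤ_b`, where
`a = lcm(k,m)` and `b = gcd(k,m)`. -/
theorem fibred_product_cyclic (k m l : ℕ)
    (hk : 0 < k) (hm : 0 < m) (hl : 0 < l) :
    ∃ Γ : AddSubgroup (ZMod (k * l) × ZMod (m * l)),
      (∀ p : ZMod (k * l) × ZMod (m * l),
        p ∈ Γ ↔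
          ZMod.castHom (dvd_mul_left l k) (ZMod l) p.1 =
            ZMod.castHom (dvd_mul_left l m) (ZMod l) p.2) ∧
      Nonempty (Γ ≃+ ZMod (Nat.lcm k m * l) × ZMod (Nat.gcd k m)) := by
  haveI : NeZero (k * l) := ⟨by positivity⟩
  haveI : NeZero (m * l) := ⟨by positivity⟩
  haveI : NeZero l := ⟨hl.ne'⟩
  set g : ℕ := Nat.gcd k m with hgdef
  set N : ℕ := Nat.lcm k m * l with hNdef
  have hg : 0 < g := Nat.gcd_pos_of_pos_left m hk
  have hN : 0 < N := Nat.mul_pos (Nat.lcm_pos hk hm) hl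
  haveI : NeZero g := ⟨hg.ne'⟩
  haveI : NeZero N := ⟨hN.ne'⟩
  set k' : ℕ := k / g with hk'def
  set m' : ℕ := m / g with hm'def
  have hkk' : g * k' = k := Nat.mul_div_cancel' (Nat.gcd_dvd_left k m)
  have hmm' : g * m' = m := Nat.mul_div_cancel' (Nat.gcd_dvd_right k m)
  have hcop : Nat.Coprime k' m' := Nat.coprime_div_gcd_div_gcd hg
  -- Bezout coefficients
  obtain ⟨α, β, hαβ⟩ : IsCoprime (k' : ℤ) (m' : ℤ) := by
    rw [Int.isCoprime_iff_gcd_eq_one, Int.gcd_natCast_natCast]; exact hcop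
  refine ⟨(fpHom k m l).ker, mem_fpKer_iff k m l, ?_⟩
  -- the two generators
  have hc : ((1 : ZMod (k * l)), (1 : ZMod (m * l))) ∈ (fpHom k m l).ker := by
    rw [mem_fpKer_iff, map_one, map_one]
  set c : (fpHom k m l).ker := ⟨(1, 1), hc⟩ with hcdef
  have hd : ((((α * k' * l : ℤ) : ZMod (k * l))),
      (((-β * m' * l : ℤ) : ZMod (m * l)))) ∈ (fpHom k m l).ker := by
    rw [mem_fpKer_iff, map_intCast, map_intCast,
      (ZMod.intCast_zmod_eq_zero_iff_dvd _ _).mpr ⟨α * k', by ring⟩,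
      (ZMod.intCast_zmod_eq_zero_iff_dvd _ _).mpr ⟨-β * m', by ring⟩]
  set d : (fpHom k m l).ker := ⟨_, hd⟩ with hddef
  -- orders
  have hcN : (zmultiplesHom _ c) (N : ℤ) = 0 := by
    ext
    · show (N : ℤ) • (1 : ZMod (k * l)) = 0
      rw [zsmul_one, ZMod.intCast_zmod_eq_zero_iff_dvd]
      exact_mod_cast Nat.mul_dvd_mul_right (Nat.dvd_lcm_left k m) l
    · show (N : ℤ) • (1 : ZMod (m * l)) = 0
      rw [zsmul_one, ZMod.intCast_zmod_eq_zero_iff_dvd]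
      exact_mod_cast Nat.mul_dvd_mul_right (Nat.dvd_lcm_right k m) l
  have hdg : (zmultiplesHom _ d) (g : ℤ) = 0 := by
    ext
    · show (g : ℤ) • ((α * k' * l : ℤ) : ZMod (k * l)) = 0
      rw [zsmul_eq_mul, ← Int.cast_natCast, ← Int.cast_mul,
        ZMod.intCast_zmod_eq_zero_iff_dvd]
      refine ⟨α, ?_⟩
      push_cast [← hkk']
      ring
    · show (g : ℤ) • ((-β * m' * l : ℤ) : ZMod (m * l)) = 0
      rw [zsmul_eq_mul, ← Int.cast_natCast, ← Int.cast_mul,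
        ZMod.intCast_zmod_eq_zero_iff_dvd]
      refine ⟨-β, ?_⟩
      push_cast [← hmm']
      ring
  set Φ : ZMod N × ZMod g →+ (fpHom k m l).ker :=
    (ZMod.lift N ⟨zmultiplesHom _ c, hcN⟩).coprod
      (ZMod.lift g ⟨zmultiplesHom _ d, hdg⟩) with hΦdef
  have hΦ : ∀ s t : ℤ, Φ ((s : ZMod N), (t : ZMod g)) = s • c + t • d := by
    intro s t
    simp [hΦdef]
  -- surjectivity
  have hsurj : Function.Surjective Φ := by
    rintro ⟨⟨p₁, p₂⟩, hp⟩
    rw [mem_fpKer_iff] at hp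
    set A : ℤ := (p₁.val : ℤ) with hAdef
    set B : ℤ := (p₂.val : ℤ) with hBdef
    have hlAB : (l : ℤ) ∣ A - B := by
      rw [← ZMod.intCast_zmod_eq_zero_iff_dvd]
      push_cast [hAdef, hBdef]
      rw [ZMod.natCast_val, ZMod.natCast_val]
      rw [show (ZMod.cast p₁ : ZMod l) = ZMod.castHom (dvd_mul_left l k) (ZMod l) p₁ from rfl,
        show (ZMod.cast p₂ : ZMod l) = ZMod.castHom (dvd_mul_left l m) (ZMod l) p₂ from rfl,
        hp, sub_self]
    set w : ℤ := (A - B) / l with hwdef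
    have hwl : w * l = A - B := Int.ediv_mul_cancel hlAB
    set s : ℤ := A - w * (α * k' * l) with hsdef
    refine ⟨((s : ZMod N), (w : ZMod g)), ?_⟩
    rw [hΦ]
    ext
    · show (s • c + w • d).val.1 = p₁
      have h1 : s • (1 : ZMod (k * l)) + w • ((α * k' * l : ℤ) : ZMod (k * l)) = p₁ := by
        rw [zsmul_one, zsmul_eq_mul, ← Int.cast_mul, ← Int.cast_add]
        have : s + w * (α * k' * l) = A := by rw [hsdef]; ring
        rw [this, hAdef, Int.cast_natCast, ZMod.natCast_val, ZMod.cast_id]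
      exact h1
    · show (s • c + w • d).val.2 = p₂
      have h2 : s • (1 : ZMod (m * l)) + w • ((-β * m' * l : ℤ) : ZMod (m * l)) = p₂ := by
        rw [zsmul_one, zsmul_eq_mul, ← Int.cast_mul, ← Int.cast_add]
        have : s + w * (-β * m' * l) = B := by
          rw [hsdef]; linear_combination (-w * (l : ℤ)) * hαβ - hwl
        rw [this, hBdef, Int.cast_natCast, ZMod.natCast_val, ZMod.cast_id]
      exact h2
  -- cardinalities
  have hcard : Nat.card (ZMod N × ZMod g) = Nat.card (fpHom k m l).ker := by
    have hfsurj : Function.Surjective (fpHom k m l) := by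
      intro z
      refine ⟨((z.val : ZMod (k * l)), 0), ?_⟩
      rw [fpHom_apply]
      simp [ZMod.natCast_val, ZMod.cast_id]
    have hquot : Nat.card ((ZMod (k * l) × ZMod (m * l)) ⧸ (fpHom k m l).ker) = l := by
      rw [Nat.card_congr (QuotientAddGroup.quotientKerEquivOfSurjective _ hfsurj).toEquiv,
        Nat.card_zmod]
    have htot := AddSubgroup.card_eq_card_quotient_mul_card_addSubgroup (fpHom k m l).ker
    rw [Nat.card_prod, Nat.card_zmod, Nat.card_zmod, hquot] at htot
    have hker : Nat.card (fpHom k m l).ker = k * m * l := by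
      have : l * (k * m * l) = l * Nat.card (fpHom k m l).ker := by
        rw [← htot]; ring
      exact (Nat.eq_of_mul_eq_mul_left hl this).symm
    rw [Nat.card_prod, Nat.card_zmod, Nat.card_zmod, hker]
    have hlg : Nat.lcm k m * g = k * m := by rw [hgdef, mul_comm, Nat.gcd_mul_lcm]
    calc N * g = Nat.lcm k m * g * l := by rw [hNdef]; ring
      _ = k * m * l := by rw [hlg]
  exact ⟨(AddEquiv.ofBijective Φ
    ((Nat.bijective_iff_surjective_and_card Φ).mpr ⟨hsurj, hcard⟩)).symm⟩
end
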